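/- Let t_A,t_B∈P_N satisfy t_A∧t_B=id (the partition into singletons), and suppose the bipartite graph G whose black vertices are the blocks of t_A, whose white vertices are the blocks of t_B, and which has one edge for each element of {1,…,N} joining the block of t_A and the block of t_B containing it, is a cycle graph. Then for every q∈P_N: d(t_A,q)+d(q,t_B)≥d(t_A,t_B)+2(1−δ_{#₁(q),0}); that is, the triangle inequality is improved by 2 whenever q has at least one singlet. -/

import Mathlib

open scoped Classical

noncomputable section

namespace RTN

/-! ## Set partitions -/

/-- Number of blocks of a set partition (as an integer). -/
def nb {α : Type*} (p : Setoid α) : ℤ := Nat.card (Quotient p)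

/-- The partition distance `d(p,q) = #(p) + #(q) - 2 #(p ⊔ q)`. -/
def pdist {α : Type*} (p q : Setoid α) : ℤ := nb p + nb q - 2 * nb (p ⊔ q)

lemma pdist_comm {α : Type*} (p q : Setoid α) : pdist p q = pdist q p := by
  unfold pdist
  rw [sup_comm p q]
  ring

/-- `k` is a singlet (block of size one) of the partition `p`. -/
def IsSinglet {α : Type*} (p : Setoid α) (k : α) : Prop := ∀ y, p.r k y → y = k

/-- The number of singlets `#₁(p)` of a partition. -/
def nS {α : Type*} (p : Setoid α) : ℤ := Nat.card {k : α // IsSinglet p k}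

/-- The singlet distance `d₁(s₁,s₂) = #₁(s₁) + #₁(s₂) - 2 #₁(s₁ ⊔ s₂)`. -/
def sdist {α : Type*} (s₁ s₂ : Setoid α) : ℤ := nS s₁ + nS s₂ - 2 * nS (s₁ ⊔ s₂)

/-- The singlet pattern `s(p)`: the coarsest partition whose singlets are exactly
those of `p` (all non-singlet elements lie in one block). -/
def spat {α : Type*} (p : Setoid α) : Setoid α where
  r x y := x = y ∨ (¬ IsSinglet p x ∧ ¬ IsSinglet p y)
  iseqv := by
    refine ⟨fun x => Or.inl rfl, ?_, ?_⟩
    · intro x y h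
      rcases h with rfl | ⟨hx, hy⟩
      · exact Or.inl rfl
      · exact Or.inr ⟨hy, hx⟩
    · intro x y z h1 h2
      rcases h1 with rfl | ⟨hx, hy⟩
      · exact h2
      · rcases h2 with rfl | ⟨_, hz⟩
        · exact Or.inr ⟨hx, hy⟩
        · exact Or.inr ⟨hx, hz⟩

/-- The bit `b^k(p)`: `0` if `p` has a singlet at `k`, else `1`. -/
def bbit {α : Type*} (p : Setoid α) (k : α) : ℤ := if IsSinglet p k then 0 else 1

/-- The size of the block of `p` containing `x`. -/
def blockSize {α : Type*} (p : Setoid α) (x : α) : ℕ := Nat.card {y : α // p.r x y}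

noncomputable instance {α : Type*} [Finite α] (s : Setoid α) : Fintype (Quotient s) :=
  Fintype.ofFinite _

/-! ## Permutations -/

/-- The partition of `α` into orbits (cycles) of a permutation. -/
def orbitSetoid {α : Type*} (g : Equiv.Perm α) : Setoid α where
  r x y := ∃ k : ℤ, (g ^ k) x = y
  iseqv := by
    refine ⟨fun x => ⟨0, by simp⟩, ?_, ?_⟩
    · rintro x y ⟨k, rfl⟩
      exact ⟨-k, by simp [← Equiv.Perm.mul_apply, ← zpow_add]⟩
    · rintro x y z ⟨k, rfl⟩ ⟨l, rfl⟩
      exact ⟨l + k, by rw [zpow_add, Equiv.Perm.mul_apply]⟩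

/-- The number of cycles `#(g)` of a permutation (fixed points included). -/
def ncyc {α : Type*} (g : Equiv.Perm α) : ℤ := nb (orbitSetoid g)

/-- The Cayley distance `d(g,h) = N - #(g h⁻¹)`. -/
def cayley {α : Type*} [Fintype α] (g h : Equiv.Perm α) : ℤ :=
  (Fintype.card α : ℤ) - ncyc (g * h⁻¹)

lemma orbitSetoid_inv {α : Type*} (g : Equiv.Perm α) : orbitSetoid g⁻¹ = orbitSetoid g := by
  apply Setoid.ext
  intro x y
  constructor
  · rintro ⟨k, hk⟩
    exact ⟨-k, by rw [← inv_zpow']; exact hk⟩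
  · rintro ⟨k, hk⟩
    exact ⟨-k, by rw [inv_zpow', neg_neg]; exact hk⟩

lemma cayley_comm {α : Type*} [Fintype α] (g h : Equiv.Perm α) : cayley g h = cayley h g := by
  unfold cayley ncyc
  rw [show h * g⁻¹ = (g * h⁻¹)⁻¹ by rw [mul_inv_rev, inv_inv], orbitSetoid_inv]

/-- Coarse graining of a partition `p` by the blocks of `P(g₀)`: the partition of the set
of blocks of `P(g₀)` induced by `p ⊔ P(g₀)`. -/
def coarse {α : Type*} (g₀ : Equiv.Perm α) (p : Setoid α) :
    Setoid (Quotient (orbitSetoid g₀)) where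
  r u v := ∃ x y : α, Quotient.mk (orbitSetoid g₀) x = u ∧ Quotient.mk (orbitSetoid g₀) y = v ∧
    (p ⊔ orbitSetoid g₀).r x y
  iseqv := by
    refine ⟨?_, ?_, ?_⟩
    · intro u
      obtain ⟨x, rfl⟩ := Quotient.exists_rep u
      exact ⟨x, x, rfl, rfl, (p ⊔ orbitSetoid g₀).iseqv.refl x⟩
    · rintro u v ⟨x, y, hx, hy, hxy⟩
      exact ⟨y, x, hy, hx, (p ⊔ orbitSetoid g₀).iseqv.symm hxy⟩
    · rintro u v w ⟨x, y, hx, hy, hxy⟩ ⟨y', z, hy', hz, hyz⟩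
      refine ⟨x, z, hx, hz, ?_⟩
      have h1 : (orbitSetoid g₀).r y y' := Quotient.exact (hy.trans hy'.symm)
      have h2 : (p ⊔ orbitSetoid g₀).r y y' :=
        (le_sup_right : orbitSetoid g₀ ≤ p ⊔ orbitSetoid g₀) h1
      exact (p ⊔ orbitSetoid g₀).iseqv.trans hxy
        ((p ⊔ orbitSetoid g₀).iseqv.trans h2 hyz)

/-- The coarse graining `q_{g₀}(g) ∈ P_{#(g₀)}` of a permutation `g`. -/
def qc {α : Type*} (g₀ g : Equiv.Perm α) : Setoid (Quotient (orbitSetoid g₀)) :=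
  coarse g₀ (orbitSetoid g)

/-! ## Standard reflected-entropy boundary elements -/

/-- `g_B`, the product of `n` disjoint `m`-cycles `(k,ℓ) ↦ (k,ℓ+1)`. -/
def gB (n m : ℕ) : Equiv.Perm (Fin n × Fin m) :=
  Equiv.prodCongr (Equiv.refl (Fin n)) (finRotate m)

/-- `γ`, cyclically shifting `k ↦ k+1` on the elements with `ℓ` in the lower half,
fixing the rest. -/
def gamma (n m : ℕ) : Equiv.Perm (Fin n × Fin m) where
  toFun x := if m / 2 ≤ (x.2 : ℕ) then (finRotate n x.1, x.2) else x
  invFun x := if m / 2 ≤ (x.2 : ℕ) then ((finRotate n).symm x.1, x.2) else x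
  left_inv := by
    intro x
    by_cases h : m / 2 ≤ (x.2 : ℕ) <;> simp [h, -finRotate_apply, -finRotate_symm_apply]
  right_inv := by
    intro x
    by_cases h : m / 2 ≤ (x.2 : ℕ) <;> simp [h, -finRotate_apply, -finRotate_symm_apply]

/-- `g_A = γ⁻¹ g_B γ`. -/
def gA (n m : ℕ) : Equiv.Perm (Fin n × Fin m) :=
  (gamma n m)⁻¹ * gB n m * gamma n m

/-- For even `m`, `Fin m` splits into an upper and a lower half. -/
def halfEquiv (m : ℕ) (hm : m % 2 = 0) : Fin 2 × Fin (m / 2) ≃ Fin m :=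
  finProdFinEquiv.trans (finCongr (by omega))

/-- `X`, the product of the `2n` disjoint `(m/2)`-cycles cyclically permuting the
upper and the lower half of each block `k`. -/
def Xel (n m : ℕ) (hm : m % 2 = 0) : Equiv.Perm (Fin n × Fin m) :=
  Equiv.prodCongr (Equiv.refl (Fin n))
    ((halfEquiv m hm).permCongr
      (Equiv.prodCongr (Equiv.refl (Fin 2)) (finRotate (m / 2))))

/-- The set of blocks of `P(X)`; it has `2n` elements. -/
abbrev BX (n m : ℕ) (hm : m % 2 = 0) := Quotient (orbitSetoid (Xel n m hm))

/-- `q_A = q_X(g_A) ∈ P_{2n}`. -/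
def qAel (n m : ℕ) (hm : m % 2 = 0) : Setoid (BX n m hm) :=
  qc (Xel n m hm) (gA n m)

/-- `q_B = q_X(g_B) ∈ P_{2n}`. -/
def qBel (n m : ℕ) (hm : m % 2 = 0) : Setoid (BX n m hm) :=
  qc (Xel n m hm) (gB n m)

/-! ## Doubled elements (two copies) -/

/-- Two copies of the index set `{1,…,mn}`. -/
abbrev DIdx (n m : ℕ) := (Fin n × Fin m) ⊕ (Fin n × Fin m)

/-- `g̃_A = g_A ⊕ g_A`. -/
def gAt (n m : ℕ) : Equiv.Perm (DIdx n m) := Equiv.sumCongr (gA n m) (gA n m)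

/-- `g̃_B = g_B ⊕ g_B`. -/
def gBt (n m : ℕ) : Equiv.Perm (DIdx n m) := Equiv.sumCongr (gB n m) (gB n m)

/-- `X̃ = X ⊕ X`. -/
def Xt (n m : ℕ) (hm : m % 2 = 0) : Equiv.Perm (DIdx n m) :=
  Equiv.sumCongr (Xel n m hm) (Xel n m hm)

/-- The set of blocks of `P(X̃)`; it has `4n` elements. -/
abbrev BXt (n m : ℕ) (hm : m % 2 = 0) := Quotient (orbitSetoid (Xt n m hm))

/-- `q̃_A = q_{X̃}(g̃_A) ∈ P_{4n}`. -/
def qAt (n m : ℕ) (hm : m % 2 = 0) : Setoid (BXt n m hm) :=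
  qc (Xt n m hm) (gAt n m)

/-- `q̃_B = q_{X̃}(g̃_B) ∈ P_{4n}`. -/
def qBt (n m : ℕ) (hm : m % 2 = 0) : Setoid (BXt n m hm) :=
  qc (Xt n m hm) (gBt n m)

/-- A block of `P(X̃)` lies in the first copy. -/
def inCopy1 {n m : ℕ} {hm : m % 2 = 0} (u : BXt n m hm) : Prop :=
  ∃ x, Quotient.mk (orbitSetoid (Xt n m hm)) (Sum.inl x) = u

/-- `#₁⁽¹⁾(q)`: the number of singlets of `q` among the first-copy positions. -/
def nS1 {n m : ℕ} {hm : m % 2 = 0} (q : Setoid (BXt n m hm)) : ℤ :=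
  Nat.card {u : BXt n m hm // IsSinglet q u ∧ inCopy1 u}

/-- `#₁⁽²⁾(q)`: the number of singlets of `q` among the second-copy positions. -/
def nS2 {n m : ℕ} {hm : m % 2 = 0} (q : Setoid (BXt n m hm)) : ℤ :=
  Nat.card {u : BXt n m hm // IsSinglet q u ∧ ¬ inCopy1 u}

/-- `τ ∈ P_{4n}`, the two-block partition separating the two copies. -/
def tau (n m : ℕ) (hm : m % 2 = 0) : Setoid (BXt n m hm) where
  r u v := inCopy1 u ↔ inCopy1 v
  iseqv := ⟨fun _ => Iff.rfl, Iff.symm, Iff.trans⟩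

/-! ## Graphs, cuts and optimization programs -/

variable {V : Type*}

/-- Sum of an edge function along (the edge list of) a walk, with multiplicity. -/
def wkSum {β : Type*} [AddCommMonoid β] {G : SimpleGraph V} {x y : V}
    (f : Sym2 V → β) (L : G.Walk x y) : β :=
  (L.edges.map f).sum

variable [Fintype V]

/-- Sum of an edge weight function over a set of edges. -/
def wsum (f : Sym2 V → ℝ) (S : Set (Sym2 V)) : ℝ :=
  ∑ e ∈ Finset.univ.filter (· ∈ S), f e

/-- The cut surface `μ(r)`: edges of `G` with one endpoint in `r`, the other outside. -/
def mu (G : SimpleGraph V) (r : Set V) : Set (Sym2 V) :=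
  {e | e ∈ G.edgeSet ∧ ∃ x y, e = s(x, y) ∧ x ∈ r ∧ y ∉ r}

/-- `μ(r₁:r₂)`: edges of `G` with an endpoint in `r₁` and an endpoint in `r₂`. -/
def mu2 (G : SimpleGraph V) (r₁ r₂ : Set V) : Set (Sym2 V) :=
  {e | e ∈ G.edgeSet ∧ ∃ x y, e = s(x, y) ∧ x ∈ r₁ ∧ y ∈ r₂}

/-- `r` is a cut for `X : Y`. -/
def IsCut (X Y r : Set V) : Prop := X ⊆ r ∧ Y ⊆ rᶜ

/-- The minimal cut area `𝒜(X:Y)`. -/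
def minCut (G : SimpleGraph V) (w : Sym2 V → ℝ) (X Y : Set V) : ℝ :=
  sInf {a | ∃ r : Set V, IsCut X Y r ∧ a = wsum w (mu G r)}

/-- `(α,β,γ)` is a triway cut for `(A,B,C)`. -/
def IsTriway (A B C α β γ : Set V) : Prop :=
  α ∪ β ∪ γ = Set.univ ∧ Disjoint α β ∧ Disjoint β γ ∧ Disjoint α γ ∧
    A ⊆ α ∧ B ⊆ β ∧ C ⊆ γ

/-- The area of a triway cut with tensions `(t_{A:B}, t_{B:C}, t_{C:A})`. -/
def triArea (G : SimpleGraph V) (w : Sym2 V → ℝ) (tAB tBC tCA : ℝ)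
    (α β γ : Set V) : ℝ :=
  tAB * wsum w (mu2 G α β) + tBC * wsum w (mu2 G β γ) + tCA * wsum w (mu2 G γ α)

/-- The minimal triway cut area `𝒜_t(A:B:C)`. -/
def triCut (G : SimpleGraph V) (w : Sym2 V → ℝ) (tAB tBC tCA : ℝ)
    (A B C : Set V) : ℝ :=
  sInf {a | ∃ α β γ : Set V, IsTriway A B C α β γ ∧ a = triArea G w tAB tBC tCA α β γ}

/-- Boundary data: `∂ = A ⊔ B ⊔ C` (pairwise disjoint). -/
def Bdy (A B C : Set V) : Prop := Disjoint A B ∧ Disjoint A C ∧ Disjoint B C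

/-! ### The permutation optimization `R` -/

/-- The symmetric edge function induced by the Cayley distance of a vertex
configuration of permutations. -/
def permE {ι : Type*} [Fintype ι] (g : V → Equiv.Perm ι) : Sym2 V → ℝ :=
  Sym2.lift ⟨fun x y => (cayley (g x) (g y) : ℝ),
    fun x y => congrArg Int.cast (cayley_comm (g x) (g y))⟩

/-- The free energy `R(g) = Σ_e w(e) d(g(x),g(y))`. -/
def Renergy {ι : Type*} [Fintype ι] (G : SimpleGraph V) (w : Sym2 V → ℝ)
    (g : V → Equiv.Perm ι) : ℝ :=
  wsum (fun e => w e * permE g e) G.edgeSet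

/-- The optimal value `R` of the permutation optimization. -/
def Rval {ι : Type*} [Fintype ι] (G : SimpleGraph V) (w : Sym2 V → ℝ)
    (A B C : Set V) (g₁ g₂ : Equiv.Perm ι) : ℝ :=
  sInf {a | ∃ g : V → Equiv.Perm ι,
    (∀ v ∈ A, g v = g₁) ∧ (∀ v ∈ B, g v = g₂) ∧ (∀ v ∈ C, g v = 1) ∧
    a = Renergy G w g}

/-! ### The set-partition optimization `Q` -/

/-- The symmetric integer edge function induced by the partition distance of a vertex
configuration of partitions. -/
def partEZ {κ : Type*} (q : V → Setoid κ) : Sym2 V → ℤ :=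
  Sym2.lift ⟨fun x y => pdist (q x) (q y), fun x y => pdist_comm (q x) (q y)⟩

/-- The free energy `Q(q) = Σ_e w(e) d(q(x),q(y))`. -/
def Qenergy {κ : Type*} (G : SimpleGraph V) (w : Sym2 V → ℝ)
    (q : V → Setoid κ) : ℝ :=
  wsum (fun e => w e * (partEZ q e : ℝ)) G.edgeSet

/-- The optimal value `Q` of the set-partition optimization. -/
def Qval {κ : Type*} (G : SimpleGraph V) (w : Sym2 V → ℝ)
    (A B C : Set V) (q₁ q₂ : Setoid κ) : ℝ :=
  sInf {a | ∃ q : V → Setoid κ,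
    (∀ v ∈ A, q v = q₁) ∧ (∀ v ∈ B, q v = q₂) ∧ (∀ v ∈ C, q v = ⊥) ∧
    a = Qenergy G w q}

/-! ### The Boolean optimization `B` -/

/-- The Hamming distance between two bit strings. -/
def ham {κ : Type*} [Fintype κ] (b₁ b₂ : κ → Bool) : ℤ :=
  ∑ k : κ, if b₁ k = b₂ k then 0 else 1

/-- The bit string `b(q)` of a partition: `false` exactly at singlets. -/
def bvec {κ : Type*} (p : Setoid κ) : κ → Bool :=
  fun u => if IsSinglet p u then false else true

/-- Feasibility of `r` for the Boolean program at configuration `b`. -/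
def Bfeas {κ : Type*} [Fintype κ] (G : SimpleGraph V) (A B : Set V) (n : ℕ)
    (b : V → κ → Bool) (r : Sym2 V → ℕ) : Prop :=
  (∀ x ∈ A, ∀ y ∈ B, ∀ L : G.Walk x y,
    2 ∣ wkSum (fun e => (r e : ℤ)) L ∧
    wkSum (fun e => (r e : ℤ)) L ≥
      2 * ((n : ℤ) - if ∀ v ∈ L.support, ∀ k, b v k = true then 1 else 0)) ∧
  (∀ x y : V, G.Adj x y → (r s(x, y) : ℤ) ≥ ⌈(ham (b x) (b y) : ℚ) / 2⌉)

/-- The inner Boolean optimum `B(b)` at a fixed Boolean configuration `b`. -/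
def BvalAt {κ : Type*} [Fintype κ] (G : SimpleGraph V) (w : Sym2 V → ℝ)
    (A B : Set V) (n : ℕ) (b : V → κ → Bool) : ℝ :=
  sInf {a | ∃ r : Sym2 V → ℕ, Bfeas G A B n b r ∧
    a = wsum (fun e => w e * (r e : ℝ)) G.edgeSet}

/-- The optimal value `B` of the Boolean optimization. -/
def Bval (κ : Type*) [Fintype κ] (G : SimpleGraph V) (w : Sym2 V → ℝ)
    (A B C : Set V) (n : ℕ) : ℝ :=
  sInf {a | ∃ b : V → κ → Bool,
    (∀ v ∈ A ∪ B, ∀ k, b v k = true) ∧ (∀ v ∈ C, ∀ k, b v k = false) ∧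
    ∃ r : Sym2 V → ℕ, Bfeas G A B n b r ∧
      a = wsum (fun e => w e * (r e : ℝ)) G.edgeSet}

/-! ### The integer program `I` -/

/-- Feasibility of `(ρ,σ)` for the integer program. -/
def IPfeas (G : SimpleGraph V) (A B C : Set V) (n : ℕ) (ρ σ : Sym2 V → ℕ) : Prop :=
  (∀ x ∈ A, ∀ y ∈ B, ∀ L : G.Walk x y,
    2 ∣ wkSum (fun e => (σ e : ℤ) + (ρ e : ℤ)) L ∧
    wkSum (fun e => (σ e : ℤ) + (ρ e : ℤ)) L ≥
      2 * ((n : ℤ) - if wkSum (fun e => (ρ e : ℤ)) L = 0 then 1 else 0)) ∧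
  (∀ x ∈ A ∪ B, ∀ y ∈ C, ∀ L : G.Walk x y,
    wkSum (fun e => (ρ e : ℤ)) L ≥ (n : ℤ))

/-- The objective of the integer program. -/
def IPobj (G : SimpleGraph V) (w : Sym2 V → ℝ) (ρ σ : Sym2 V → ℕ) : ℝ :=
  wsum (fun e => w e * ((σ e : ℝ) + (ρ e : ℝ))) G.edgeSet

/-- The optimal value `I` of the integer program. -/
def Ival (G : SimpleGraph V) (w : Sym2 V → ℝ) (A B C : Set V) (n : ℕ) : ℝ :=
  sInf {a | ∃ ρ σ : Sym2 V → ℕ, IPfeas G A B C n ρ σ ∧ a = IPobj G w ρ σ}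

/-! ### The ℓ-intersecting cut problem `M` -/

/-- Feasibility for the `ℓ`-intersecting cut problem with boundary sets
`Γ₀, …, Γ_ℓ` and `C`, for a half-integer valued `ϱ`. -/
def Mfeas (G : SimpleGraph V) (Γ : ℕ → Set V) (ℓ : ℕ) (C : Set V)
    (ϱ : Sym2 V → ℚ) : Prop :=
  (∀ e, ∃ j : ℕ, ϱ e = (j : ℚ) / 2) ∧
  (∀ k k' : ℕ, k ≤ ℓ → k' ≤ ℓ → ∀ x ∈ Γ k, ∀ y ∈ Γ k', ∀ L : G.Walk x y,
    ∃ j : ℕ, wkSum ϱ L = |(k : ℚ) - (k' : ℚ)| + (j : ℚ)) ∧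
  (∀ k : ℕ, k ≤ ℓ → ∀ x ∈ Γ k, ∀ y ∈ C, ∀ L : G.Walk x y,
    ∃ j : ℕ, wkSum ϱ L = (ℓ : ℚ) / 2 + (j : ℚ))

/-- The objective of the `ℓ`-intersecting cut problem. -/
def Mobj (G : SimpleGraph V) (w : Sym2 V → ℝ) (ϱ : Sym2 V → ℚ) : ℝ :=
  wsum (fun e => w e * (ϱ e : ℝ)) G.edgeSet

/-- The optimal value `M` of the `ℓ`-intersecting cut problem. -/
def Mval (G : SimpleGraph V) (w : Sym2 V → ℝ) (Γ : ℕ → Set V) (ℓ : ℕ)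
    (C : Set V) : ℝ :=
  sInf {a | ∃ ϱ : Sym2 V → ℚ, Mfeas G Γ ℓ C ϱ ∧ a = Mobj G w ϱ}

/-- The complementary reduced graph `G^c`: the edges of `G` not lying entirely
inside `V'`. -/
def reducedGraph (G : SimpleGraph V) (V' : Set V) : SimpleGraph V where
  Adj x y := G.Adj x y ∧ ¬ (x ∈ V' ∧ y ∈ V')
  symm := by
    constructor
    intro x y h
    exact ⟨h.1.symm, fun hc => h.2 ⟨hc.2, hc.1⟩⟩
  loopless := by
    constructor
    intro x h
    exact G.loopless.irrefl x h.1

end RTN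
/-! Splitting the singlet `k` of `q` off its `t_B`-block `{k, j}` turns `t_B` into `t_B'` with
`d(q, t_B') = d(q, t_B) - 1`, because `k` is a singlet of both `q` and `t_B'`, so the split is
not undone in `q ∨ t_B'`. On the other hand `d(t_A, t_B') = d(t_A, t_B) + 1`: all blocks of
`t_A` and `t_B` have even size, so the block of `k` in `t_A ∨ t_B'` cannot be missing `j` (it
would be a union of `t_A`-blocks and, after removing `k`, of `t_B`-blocks, hence of even and odd
size at once). The triangle inequality for `t_A, q, t_B'` then gives the improvement by 2. The
triangle inequality itself comes from the semimodularity
`#(q ∨ x) + #(q ∨ y) ≤ #q + #(q ∨ x ∨ y)` of the partition lattice, proved by joining `x` to `q`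
one pair at a time. -/

namespace RTN

variable {α : Type*}

def merged (p : Setoid α) (i j : α) : Setoid α where
  r x y := p.r x y ∨ (p.r x i ∧ p.r j y) ∨ (p.r x j ∧ p.r i y)
  iseqv := by
    refine ⟨fun x => Or.inl (p.refl x), ?_, ?_⟩
    · rintro x y (h | ⟨h₁, h₂⟩ | ⟨h₁, h₂⟩)
      · exact Or.inl (p.symm h)
      · exact Or.inr (Or.inr ⟨p.symm h₂, p.symm h₁⟩)
      · exact Or.inr (Or.inl ⟨p.symm h₂, p.symm h₁⟩)
    · rintro x y z (h | ⟨h₁, h₂⟩ | ⟨h₁, h₂⟩) (h' | ⟨h₁', h₂'⟩ | ⟨h₁', h₂'⟩)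
      · exact Or.inl (p.trans h h')
      · exact Or.inr (Or.inl ⟨p.trans h h₁', h₂'⟩)
      · exact Or.inr (Or.inr ⟨p.trans h h₁', h₂'⟩)
      · exact Or.inr (Or.inl ⟨h₁, p.trans h₂ h'⟩)
      · exact Or.inl (p.trans h₁ (p.trans (p.symm (p.trans h₂ h₁')) h₂'))
      · exact Or.inl (p.trans h₁ h₂')
      · exact Or.inr (Or.inr ⟨h₁, p.trans h₂ h'⟩)
      · exact Or.inl (p.trans h₁ h₂')
      · exact Or.inl (p.trans h₁ (p.trans (p.symm (p.trans h₂ h₁')) h₂'))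

lemma le_merged (p : Setoid α) (i j : α) : p ≤ merged p i j := fun _ _ h => Or.inl h

lemma merged_rel (p : Setoid α) (i j : α) : (merged p i j).r i j :=
  Or.inr (Or.inl ⟨p.refl i, p.refl j⟩)

lemma merged_le {p r : Setoid α} {i j : α} (h : p ≤ r) (hij : r.r i j) : merged p i j ≤ r := by
  rintro x y (h' | ⟨h₁, h₂⟩ | ⟨h₁, h₂⟩)
  · exact h h'
  · exact r.trans (h h₁) (r.trans hij (h h₂))
  · exact r.trans (h h₁) (r.trans (r.symm hij) (h h₂))

lemma merged_mono {p p' : Setoid α} (h : p ≤ p') (i j : α) : merged p i j ≤ merged p' i j :=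
  merged_le (h.trans (le_merged p' i j)) (merged_rel p' i j)

lemma merged_eq_self {p : Setoid α} {i j : α} (h : p.r i j) : merged p i j = p :=
  le_antisymm (merged_le le_rfl h) (le_merged p i j)

lemma sup_merged (s p : Setoid α) (i j : α) : s ⊔ merged p i j = merged (s ⊔ p) i j :=
  le_antisymm (sup_le (le_sup_left.trans (le_merged _ i j)) (merged_mono le_sup_right i j))
    (merged_le (sup_le_sup_left (le_merged p i j) s)
      ((le_sup_right : merged p i j ≤ s ⊔ merged p i j) (merged_rel p i j)))

lemma nb_merged_add_one [Finite α] {p : Setoid α} {i j : α} (hij : ¬ p.r i j) :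
    nb (merged p i j) + 1 = nb p := by
  let f (u : {u : Quotient p // u ≠ Quotient.mk p j}) : Quotient (merged p i j) :=
    Setoid.map_of_le (le_merged p i j) u.1
  have hf : Function.Bijective f := by
    constructor
    · rintro ⟨u, hu⟩ ⟨v, hv⟩ huv
      induction u using Quotient.inductionOn
      induction v using Quotient.inductionOn
      rcases Quotient.exact huv with h | ⟨-, h⟩ | ⟨h, -⟩
      · exact Subtype.ext (Quotient.sound h)
      · exact absurd (Quotient.sound (p.symm h)) hv
      · exact absurd (Quotient.sound h) hu
    · intro v
      induction v using Quotient.inductionOn with | _ x => ?_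
      by_cases hx : p.r j x
      · exact ⟨⟨Quotient.mk p i, fun h => hij (Quotient.exact h)⟩,
          Quotient.sound (Or.inr (Or.inl ⟨p.refl i, hx⟩))⟩
      · exact ⟨⟨Quotient.mk p x, fun h => hx (p.symm (Quotient.exact h))⟩, rfl⟩
  have hcard : Nat.card (Quotient p) = Nat.card (Quotient (merged p i j)) + 1 := by
    rw [← Nat.card_congr (Equiv.ofBijective f hf),
      ← Nat.card_congr (Equiv.optionSubtypeNe (Quotient.mk p j)), Nat.card_eq_fintype_card,
      Fintype.card_option, Nat.card_eq_fintype_card]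
  simp only [nb, hcard, Nat.cast_add, Nat.cast_one]

lemma nb_le_nb_merged_add_one [Finite α] (p : Setoid α) (i j : α) :
    nb p ≤ nb (merged p i j) + 1 := by
  by_cases hij : p.r i j
  · rw [merged_eq_self hij]
    omega
  · rw [nb_merged_add_one hij]

lemma nb_anti [Finite α] : Antitone (nb : Setoid α → ℤ) := fun p p' h => by
  unfold nb
  exact_mod_cast Nat.card_le_card_of_surjective (Setoid.map_of_le h)
    fun v => Quotient.inductionOn v fun x => ⟨Quotient.mk p x, rfl⟩

lemma nb_sub_nb_sup_le_of_le [Finite α] {p p' : Setoid α} (x : Setoid α) (h : p ≤ p') :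
    nb p' - nb (p' ⊔ x) ≤ nb p - nb (p ⊔ x) := by
  induction hn : Nat.card (Quotient p) using Nat.strong_induction_on generalizing p p' with
  | _ n ih =>
  by_cases hx : x ≤ p
  · rw [sup_eq_left.2 hx, sup_eq_left.2 (hx.trans h), sub_self, sub_self]
  obtain ⟨a, b, hab, hpab⟩ : ∃ a b, x.r a b ∧ ¬ p.r a b := by
    simpa [Setoid.le_def] using hx
  have hdrop := nb_merged_add_one hpab
  have hdrop' := nb_le_nb_merged_add_one p' a b
  have hjoin (s : Setoid α) : merged s a b ⊔ x = s ⊔ x := by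
    rw [sup_comm, sup_merged, merged_eq_self ((le_sup_left : x ≤ x ⊔ s) hab), sup_comm]
  have hstep := ih _ (by simp only [nb] at hdrop; omega) (merged_mono h a b) rfl
  rw [hjoin, hjoin] at hstep
  linarith

theorem nb_sup_add_nb_sup_le [Finite α] (q x y : Setoid α) :
    nb (q ⊔ x) + nb (q ⊔ y) ≤ nb q + nb (q ⊔ x ⊔ y) := by
  have hdrop := nb_sub_nb_sup_le_of_le x (le_sup_left : q ≤ q ⊔ y)
  rw [sup_right_comm] at hdrop
  linarith

theorem pdist_triangle [Finite α] (p q r : Setoid α) : pdist p r ≤ pdist p q + pdist q r := by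
  have hsub := nb_sup_add_nb_sup_le q p r
  have hanti := nb_anti (sup_le_sup_right le_sup_right r : p ⊔ r ≤ q ⊔ p ⊔ r)
  simp only [pdist, sup_comm p q] at *
  linarith

lemma exists_isSinglet_of_nS_ne_zero {p : Setoid α} (h : nS p ≠ 0) : ∃ k, IsSinglet p k := by
  have hcard : Nat.card {k // IsSinglet p k} ≠ 0 := fun h0 => h (by simp [nS, h0])
  obtain ⟨⟨k, hk⟩⟩ := (Nat.card_ne_zero.1 hcard).1
  exact ⟨k, hk⟩

lemma isSinglet_bot (k : α) : IsSinglet ⊥ k := fun _ hy => hy.symm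

lemma IsSinglet.le_ker {p : Setoid α} {k : α} (h : IsSinglet p k) :
    p ≤ Setoid.ker (· = k) := fun x y hxy =>
  Setoid.ker_def.2 <| propext
    ⟨fun hx => by subst x; exact h y hxy, fun hy => by subst y; exact h x (p.symm hxy)⟩

lemma isSinglet_of_le_ker {p : Setoid α} {k : α} (h : p ≤ Setoid.ker (· = k)) :
    IsSinglet p k := fun _ hy => (eq_iff_iff.1 (Setoid.ker_def.1 (h hy))).1 rfl

lemma IsSinglet.sup {p q : Setoid α} {k : α} (hp : IsSinglet p k) (hq : IsSinglet q k) :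
    IsSinglet (p ⊔ q) k :=
  isSinglet_of_le_ker (sup_le hp.le_ker hq.le_ker)

def split (p : Setoid α) (k : α) : Setoid α where
  r x y := p.r x y ∧ (x = k ↔ y = k)
  iseqv := ⟨fun x => ⟨p.refl x, Iff.rfl⟩, fun h => ⟨p.symm h.1, h.2.symm⟩,
    fun h h' => ⟨p.trans h.1 h'.1, h.2.trans h'.2⟩⟩

lemma isSinglet_split (p : Setoid α) (k : α) : IsSinglet (split p k) k :=
  fun _ hy => hy.2.1 rfl

lemma merged_split {r : Setoid α} {k j : α} (hkj : r.r k j) (hjk : j ≠ k) :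
    merged (split r k) k j = r := by
  refine le_antisymm (merged_le (fun _ _ h => h.1) hkj) ?_
  intro x y hxy
  by_cases hx : x = k <;> by_cases hy : y = k
  · subst x y
    exact (merged _ k j).refl k
  · subst x
    exact Or.inr (Or.inl ⟨(split r k).refl k, r.trans (r.symm hkj) hxy, iff_of_false hjk hy⟩)
  · subst y
    exact Or.inr (Or.inr ⟨⟨r.trans hxy hkj, iff_of_false hx hjk⟩, (split r k).refl k⟩)
  · exact Or.inl ⟨hxy, iff_of_false hx hy⟩

lemma nb_sup_split [Finite α] {q r : Setoid α} {k j : α} (hq : IsSinglet q k) (hkj : r.r k j)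
    (hjk : j ≠ k) : nb (q ⊔ split r k) = nb (q ⊔ r) + 1 := by
  have hsep : ¬ (q ⊔ split r k).r k j := fun h => hjk (hq.sup (isSinglet_split r k) j h)
  rw [← merged_split hkj hjk, sup_merged, nb_merged_add_one hsep, merged_split hkj hjk]

lemma nb_split [Finite α] {r : Setoid α} {k j : α} (hkj : r.r k j) (hjk : j ≠ k) :
    nb (split r k) = nb r + 1 := by
  simpa only [bot_sup_eq] using nb_sup_split (isSinglet_bot k) hkj hjk

lemma pdist_split_of_isSinglet [Finite α] {q r : Setoid α} {k j : α} (hq : IsSinglet q k)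
    (hkj : r.r k j) (hjk : j ≠ k) : pdist q (split r k) = pdist q r - 1 := by
  simp only [pdist, nb_split hkj hjk, nb_sup_split hq hkj hjk]
  ring

lemma pdist_split_of_rel_sup [Finite α] {p r : Setoid α} {k j : α} (hkj : r.r k j) (hjk : j ≠ k)
    (hconn : (p ⊔ split r k).r k j) : pdist p (split r k) = pdist p r + 1 := by
  have hsup : p ⊔ r = p ⊔ split r k := by
    rw [← merged_split hkj hjk, sup_merged, merged_eq_self hconn, merged_split hkj hjk]
  simp only [pdist, nb_split hkj hjk, hsup]
  ring

lemma exists_partner {p : Setoid α} {k : α} (h : blockSize p k = 2) :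
    ∃ j ≠ k, ∀ x, p.r k x ↔ x = k ∨ x = j := by
  obtain ⟨⟨j, hj⟩, hne, huniq⟩ := (Nat.card_eq_two_iff' (⟨k, p.refl k⟩ : {y // p.r k y})).1 h
  refine ⟨j, fun h => hne (Subtype.ext h), fun x => ⟨fun hx => ?_, ?_⟩⟩
  · by_cases hxk : x = k
    · exact Or.inl hxk
    · exact Or.inr (congrArg Subtype.val (huniq ⟨x, hx⟩ fun h => hxk (congrArg Subtype.val h)))
  · rintro (rfl | rfl)
    exacts [p.refl x, hj]

lemma even_card_of_saturated [Fintype α] {p : Setoid α} (hp : ∀ x, Even (blockSize p x))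
    {S : Finset α} (hS : ∀ x ∈ S, ∀ y, p.r x y → y ∈ S) : Even S.card := by
  rw [Finset.card_eq_sum_card_image (Quotient.mk p)]
  refine Finset.even_sum _ fun u hu => ?_
  obtain ⟨x, hx, rfl⟩ := Finset.mem_image.1 hu
  have hblock : S.filter (fun y => Quotient.mk p y = Quotient.mk p x) =
      Finset.univ.filter (p.r x) := by
    ext y
    simp only [Finset.mem_filter, Finset.mem_univ, true_and, Quotient.eq]
    exact ⟨fun h => p.symm h.2, fun h => ⟨hS x hx y h, p.symm h⟩⟩
  rw [hblock, ← Fintype.card_subtype, ← Nat.card_eq_fintype_card]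
  exact hp x

lemma rel_sup_split_of_even [Fintype α] {p r : Setoid α} {k j : α}
    (hp : ∀ x, Even (blockSize p x)) (hr : ∀ x, Even (blockSize r x)) (hjk : j ≠ k)
    (hkr : ∀ x, r.r k x ↔ x = k ∨ x = j) : (p ⊔ split r k).r k j := by
  by_contra hkj
  set s := p ⊔ split r k
  let S := Finset.univ.filter (s.r k)
  have hkS : k ∈ S := by simp [S]
  have hjS : j ∉ S := by simpa [S] using hkj
  have hS : Even S.card := even_card_of_saturated hp fun x hx y hxy => by
    simp only [S, Finset.mem_filter, Finset.mem_univ, true_and] at hx ⊢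
    exact s.trans hx ((le_sup_left : p ≤ s) hxy)
  have hS' : Even (S.erase k).card := even_card_of_saturated hr fun x hx y hxy => by
    obtain ⟨hxk, hxS⟩ := Finset.mem_erase.1 hx
    have hyk : y ≠ k := by
      rintro rfl
      rcases (hkr x).1 (r.symm hxy) with rfl | rfl
      exacts [hxk rfl, hjS hxS]
    simp only [S, Finset.mem_erase, Finset.mem_filter, Finset.mem_univ, true_and] at hxS ⊢
    exact ⟨hyk, s.trans hxS ((le_sup_right : split r k ≤ s) ⟨hxy, iff_of_false hxk hyk⟩)⟩
  rw [Finset.card_erase_of_mem hkS] at hS'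
  have hpos := Finset.card_pos.2 ⟨k, hkS⟩
  rcases hS with ⟨a, ha⟩
  rcases hS' with ⟨b, hb⟩
  omega

end RTN

theorem improved_triangle_inequality_cycle_general {N : ℕ}
    (tA tB : Setoid (Fin N))
    (hA2 : ∀ x, RTN.blockSize tA x = 2)
    (hB2 : ∀ x, RTN.blockSize tB x = 2)
    (q : Setoid (Fin N)) :
    RTN.pdist tA q + RTN.pdist q tB ≥
      RTN.pdist tA tB + 2 * (1 - if RTN.nS q = 0 then (1 : ℤ) else 0) := by
  split_ifs with hs
  · linarith [RTN.pdist_triangle tA q tB]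
  obtain ⟨k, hk⟩ := RTN.exists_isSinglet_of_nS_ne_zero hs
  obtain ⟨j, hjk, hkB⟩ := RTN.exists_partner (hB2 k)
  have hkj : tB.r k j := (hkB j).2 (Or.inr rfl)
  have hconn := RTN.rel_sup_split_of_even (p := tA) (fun x => hA2 x ▸ even_two)
    (fun x => hB2 x ▸ even_two) hjk hkB
  have htri := RTN.pdist_triangle tA q (RTN.split tB k)
  rw [RTN.pdist_split_of_rel_sup hkj hjk hconn, RTN.pdist_split_of_isSinglet hk hkj hjk] at htri
  linarith

/-- If `t_A ∧ t_B = id` and the associated bipartite block graph is a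
cycle graph (every block of `t_A` and `t_B` has size two, and `t_A ⊔ t_B = ⊤`, i.e. the
graph is 2-regular and connected), then for every `q ∈ P_N`:
`d(t_A,q) + d(q,t_B) ≥ d(t_A,t_B) + 2(1 - δ_{#₁(q),0})`. -/
theorem improved_triangle_inequality_cycle {N : ℕ} (hN : 0 < N)
    (tA tB : Setoid (Fin N))
    (hmeet : tA ⊓ tB = ⊥)
    (hA2 : ∀ x, RTN.blockSize tA x = 2)
    (hB2 : ∀ x, RTN.blockSize tB x = 2)
    (hconn : tA ⊔ tB = ⊤)
    (q : Setoid (Fin N)) :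
    RTN.pdist tA q + RTN.pdist q tB ≥
      RTN.pdist tA tB + 2 * (1 - if RTN.nS q = 0 then (1 : ℤ) else 0) :=
  improved_triangle_inequality_cycle_general tA tB hA2 hB2 q
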